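/- With c ≠ x y x and θ the run-replacement bijection, for every composition a the maximum run length R(a) of c in a equals the maximum k such that the run part k̄ appears in θ(a) (with both defined as 0 when c does not occur in a). -/

import Mathlib

/-!
Expanding each part of `θ(a)` back (`p ↦ [p]`, `k̄ ↦ c ^ k`) recovers `a`, so a run part `k̄`
of `θ(a)` is a block of `k` consecutive copies of `c` in `a`. Conversely, as `c` has no border,
occurrences of `c` never overlap, so a copy of `c` that `θ` consumes ends before any block of
copies of `c` starting after it. Hence a block of `k` copies either begins a run that `θ`
replaces by some `k̄'` with `k' ≥ k`, or lies in the part of `a` that `θ` has yet to read.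
-/

/-- The size of a part in the extended alphabet `ℕ ⊕ ℕ`: `Sum.inl p` is an
ordinary part of size `p`, and `Sum.inr k` is the run part `k̄` of size
`k * |c|`. -/
def runPartSize (c : List ℕ) : ℕ ⊕ ℕ → ℕ
  | Sum.inl p => p
  | Sum.inr k => k * c.sum

/-- The run-replacement map `θ`: each maximal run of `k` consecutive copies of
`c` in `a` is replaced by the single run part `k̄ = Sum.inr k`; all other parts
`p` become ordinary parts `Sum.inl p`. -/
def theta (c : List ℕ) (a : List ℕ) : List (ℕ ⊕ ℕ) :=
  if hc : c = [] then a.map Sum.inl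
  else
    match a with
    | [] => []
    | p :: rest =>
      if c <+: (p :: rest) then
        match theta c ((p :: rest).drop c.length) with
        | Sum.inr k :: t => Sum.inr (k + 1) :: t
        | t => Sum.inr 1 :: t
      else Sum.inl p :: theta c rest
termination_by a.length
decreasing_by
  · simp only [List.length_drop, List.length_cons]
    have : 0 < c.length := by cases c <;> simp_all
    omega
  · simp

namespace List

variable {α : Type*}

def Bordered (c : List α) : Prop := ∃ x y : List α, x ≠ [] ∧ c = x ++ y ++ x

/-- When `|u| < |v|`, write `v = u ++ v'`: then `v'` is a shorter border, since
`u ++ u ++ v' = v' ++ w ++ w`. -/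
theorem bordered_of_append_eq_append {u v w : List α} (hu : u ≠ []) (hv : v ≠ [])
    (h : u ++ v = v ++ w) : (u ++ v).Bordered := by
  induction hn : v.length using Nat.strong_induction_on generalizing u v w with
  | _ n ih =>
    rcases List.append_eq_append_iff.mp h with ⟨v', hvu, hvw⟩ | ⟨y, rfl, -⟩
    · subst hvu
      rcases eq_or_ne v' [] with rfl | hv'
      · exact ⟨u, [], hu, by simp⟩
      · have hlen : v'.length < n := by
          subst hn; simpa using List.length_pos_iff.mpr hu
        have hshift : u ++ u ++ v' = v' ++ (w ++ w) := by
          rw [List.append_assoc, h, hvw, List.append_assoc]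
        simpa using ih _ hlen (by simpa using hu) hv' hshift rfl
    · exact ⟨v, y, hv, by simp⟩

/-- Two occurrences of an unbordered word cannot overlap. -/
theorem eq_nil_or_prefix_of_append_eq_append {c d s e : List α} (hc : ¬ c.Bordered)
    (h : c ++ d = s ++ (c ++ e)) : s = [] ∨ c <+: s := by
  rcases List.append_eq_append_iff.mp h with ⟨s', rfl, -⟩ | ⟨b, hcb, hb⟩
  · exact Or.inr (List.prefix_append c s')
  · rcases List.append_eq_append_iff.mp hb with ⟨e', rfl, -⟩ | ⟨w, hbw, -⟩
    · have hlen := congrArg List.length hcb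
      simp only [List.length_append] at hlen
      exact Or.inl (List.length_eq_zero_iff.mp (by omega))
    · rcases eq_or_ne s [] with hs | hs
      · exact Or.inl hs
      rcases eq_or_ne b [] with rfl | hb'
      · exact Or.inr (by simp [hcb])
      · exact (hc (hcb ▸ bordered_of_append_eq_append hs hb' (hcb.symm.trans hbw))).elim

end List

def bumpRun : List (ℕ ⊕ ℕ) → List (ℕ ⊕ ℕ)
  | Sum.inr k :: t => Sum.inr (k + 1) :: t
  | t => Sum.inr 1 :: t

def expandPart (c : List ℕ) : ℕ ⊕ ℕ → List ℕ :=
  Sum.elim (fun p => [p]) (fun k => (List.replicate k c).flatten)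

section theta

variable {c : List ℕ}

theorem theta_nil (c : List ℕ) : theta c [] = [] := by
  rw [theta]; split <;> simp

theorem theta_append_self (hc : c ≠ []) (d : List ℕ) :
    theta c (c ++ d) = bumpRun (theta c d) := by
  obtain ⟨p, c', rfl⟩ := List.exists_cons_of_ne_nil hc
  have hpre : p :: c' <+: p :: (c' ++ d) := List.prefix_append (p :: c') d
  rw [theta.eq_def, dif_neg hc]
  simp only [List.cons_append]
  rw [if_pos hpre]
  simp only [← List.cons_append, List.drop_left]
  rfl

theorem theta_cons_of_not_prefix (hc : c ≠ []) {p : ℕ} {rest : List ℕ}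
    (h : ¬ c <+: p :: rest) : theta c (p :: rest) = Sum.inl p :: theta c rest := by
  rw [theta]; simp [hc, h]

theorem theta_induction (hc : c ≠ []) {motive : List ℕ → Prop} (nil : motive [])
    (run : ∀ d, motive d → motive (c ++ d))
    (cons : ∀ p rest, ¬ c <+: p :: rest → motive rest → motive (p :: rest)) (a : List ℕ) :
    motive a := by
  have run' : ∀ p rest, c <+: p :: rest → motive ((p :: rest).drop c.length) →
      motive (p :: rest) := by
    rintro p rest ⟨d, hd⟩ h
    rw [← hd, List.drop_left] at h
    exact hd ▸ run d h
  induction a using theta.induct c with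
  | case1 => exact absurd ‹_› hc
  | case2 => exact nil
  | case3 _ p rest hpre _ _ _ ih => exact run' p rest hpre ih
  | case4 _ p rest hpre _ ih => exact run' p rest hpre ih
  | case5 _ p rest hpre ih => exact cons p rest hpre ih

theorem flatMap_expandPart_bumpRun (l : List (ℕ ⊕ ℕ)) :
    (bumpRun l).flatMap (expandPart c) = c ++ l.flatMap (expandPart c) := by
  unfold bumpRun
  split <;> simp [expandPart, List.replicate_succ]

theorem flatMap_expandPart_theta (hc : c ≠ []) (a : List ℕ) :
    (theta c a).flatMap (expandPart c) = a := by
  induction a using theta_induction hc with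
  | nil => simp [theta_nil]
  | run d ih => rw [theta_append_self hc, flatMap_expandPart_bumpRun, ih]
  | cons p rest hpre ih => rw [theta_cons_of_not_prefix hc hpre, List.flatMap_cons, ih]; rfl

theorem replicate_infix_of_mem_theta (hc : c ≠ []) {a : List ℕ} {k : ℕ}
    (h : Sum.inr k ∈ theta c a) : (List.replicate k c).flatten <:+: a := by
  rw [← flatMap_expandPart_theta hc a, List.flatMap_def]
  exact List.infix_of_mem_flatten (List.mem_map_of_mem (f := expandPart c) h)

theorem exists_le_mem_bumpRun {l : List (ℕ ⊕ ℕ)} {k : ℕ} (h : Sum.inr k ∈ l) :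
    ∃ m, k ≤ m ∧ Sum.inr m ∈ bumpRun l := by
  match l, h with
  | Sum.inl _ :: _, h => exact ⟨k, le_rfl, List.mem_cons_of_mem _ h⟩
  | Sum.inr _ :: _, .head _ => exact ⟨_, Nat.le_succ _, List.mem_cons_self⟩
  | Sum.inr _ :: _, .tail _ h => exact ⟨k, le_rfl, List.mem_cons_of_mem _ h⟩

theorem theta_eq_cons_of_replicate_prefix (hc : c ≠ []) {k : ℕ} (hk : 0 < k) {a : List ℕ}
    (h : (List.replicate k c).flatten <+: a) :
    ∃ m t, k ≤ m ∧ theta c a = Sum.inr m :: t := by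
  induction k, hk using Nat.le_induction generalizing a with
  | base =>
    obtain ⟨d, rfl⟩ : c <+: a := by simpa using h
    rw [theta_append_self hc]
    unfold bumpRun
    split <;> exact ⟨_, _, by omega, rfl⟩
  | succ k _ ih =>
    obtain ⟨d, rfl⟩ : c <+: a :=
      (List.prefix_append _ _).trans (by simpa [List.replicate_succ] using h)
    have hd : (List.replicate k c).flatten <+: d := by
      simpa [List.replicate_succ, List.prefix_append_right_inj] using h
    obtain ⟨m, t, hkm, hm⟩ := ih hd
    exact ⟨m + 1, t, by omega, by rw [theta_append_self hc, hm, bumpRun]⟩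

theorem exists_le_mem_theta_of_replicate_infix (hc : c ≠ []) (hxyx : ¬ c.Bordered) {k : ℕ}
    (hk : 0 < k) {a : List ℕ} (h : (List.replicate k c).flatten <:+: a) :
    ∃ m, k ≤ m ∧ Sum.inr m ∈ theta c a := by
  obtain ⟨k, rfl⟩ : ∃ k', k = k' + 1 := ⟨k - 1, by omega⟩
  have of_prefix : ∀ {a}, (List.replicate (k + 1) c).flatten <+: a →
      ∃ m, k + 1 ≤ m ∧ Sum.inr m ∈ theta c a := fun hpre => by
    obtain ⟨m, t, hkm, hm⟩ := theta_eq_cons_of_replicate_prefix hc hk hpre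
    exact ⟨m, hkm, hm ▸ List.mem_cons_self⟩
  induction a using theta_induction hc with
  | nil => simp [List.replicate_succ, hc] at h
  | run d ih =>
    obtain ⟨s, e, hse⟩ := h
    rcases List.eq_nil_or_prefix_of_append_eq_append hxyx
      (e := (List.replicate k c).flatten ++ e) (by simpa [List.replicate_succ] using hse.symm)
      with rfl | ⟨s', rfl⟩
    · exact of_prefix ⟨e, hse⟩
    · obtain ⟨m, hkm, hm⟩ := ih ⟨s', e, by simpa using hse⟩
      rw [theta_append_self hc]
      obtain ⟨m', hmm', hm'⟩ := exists_le_mem_bumpRun hm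
      exact ⟨m', hkm.trans hmm', hm'⟩
  | cons p rest hpre ih =>
    rw [theta_cons_of_not_prefix hc hpre]
    rcases List.infix_cons_iff.mp h with h | h
    · exact (hpre ((List.prefix_append _ _).trans (by simpa [List.replicate_succ] using h))).elim
    · obtain ⟨m, hkm, hm⟩ := ih h
      exact ⟨m, hkm, List.mem_cons_of_mem _ hm⟩

theorem le_length_of_replicate_infix (hc : c ≠ []) {k : ℕ} {a : List ℕ}
    (h : (List.replicate k c).flatten <:+: a) : k ≤ a.length := by
  have hlen := h.length_le
  simp only [List.length_flatten, List.map_replicate, List.sum_replicate, smul_eq_mul] at hlen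
  exact (Nat.le_mul_of_pos_right k (List.length_pos_iff.mpr hc)).trans hlen

end theta

theorem Nat.sSup_eq_of_subset_of_forall_exists_le {s t : Set ℕ} (hs : BddAbove s)
    (hts : t ⊆ s) (hst : ∀ k ∈ s, 0 < k → ∃ m, k ≤ m ∧ m ∈ t) :
    sSup s = sSup t := by
  refine le_antisymm (csSup_le' fun k hk => ?_) (csSup_le_csSup' hs hts)
  rcases Nat.eq_zero_or_pos k with rfl | hk0
  · exact Nat.zero_le _
  · obtain ⟨m, hkm, hm⟩ := hst k hk hk0
    exact le_csSup_of_le (hs.mono hts) hm hkm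

theorem max_run_eq_max_run_part_general (c : List ℕ) (hc : c ≠ [])
    (hxyx : ¬ ∃ x y : List ℕ, x ≠ [] ∧ c = x ++ y ++ x) (a : List ℕ) :
    sSup {k : ℕ | (List.replicate k c).flatten <:+: a}
      = sSup {k : ℕ | Sum.inr k ∈ theta c a} := by
  refine Nat.sSup_eq_of_subset_of_forall_exists_le
    ⟨a.length, fun k hk => le_length_of_replicate_infix hc hk⟩
    (fun k hk => replicate_infix_of_mem_theta hc hk)
    (fun k hk hk0 => exists_le_mem_theta_of_replicate_infix hc hxyx hk0 hk)

/-- The maximum run length `R(a)` of `c` in `a` (the largest `k` such that `k`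
consecutive copies of `c` occur as a block in `a`) equals the maximum `k` such
that the run part `k̄` appears in `θ(a)`; both are `0` when `c` does not occur
in `a`. -/
theorem max_run_eq_max_run_part (c : List ℕ) (hc : c ≠ []) (hpos : ∀ p ∈ c, 0 < p)
    (hxyx : ¬ ∃ x y : List ℕ, x ≠ [] ∧ c = x ++ y ++ x) (a : List ℕ) :
    sSup {k : ℕ | (List.replicate k c).flatten <:+: a}
      = sSup {k : ℕ | Sum.inr k ∈ theta c a} :=
  max_run_eq_max_run_part_general c hc hxyx a
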